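/- arXiv:1411.7056 — 2 statements merged into one kernel-verified Lean document; each statement's English description precedes it below -/
import Mathlib

section
/- Let F ∈ L²(μ) and let n, m be nonnegative integers. Then Δ_{n,m}(F,μ) ≠ 0 if and only if every solution (P,Q) of the (n,m) Padé-orthogonal problem for F with respect to μ satisfies deg Q = m. -/
open MeasureTheory Polynomial Filter Topology Set
open scoped ENNReal

/-- The inner product `⟨g,h⟩_μ := ∫ g(ζ)·conj(h(ζ)) dμ(ζ)`. -/
noncomputable def innerMu (μ : Measure ℂ) (g h : ℂ → ℂ) : ℂ :=
  ∫ ζ, g ζ * (starRingEnd ℂ) (h ζ) ∂μ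

/-- The (topological) support of a measure on `ℂ`: the set of points all of whose
neighborhoods have positive measure. -/
def measSupp (μ : Measure ℂ) : Set ℂ :=
  {z : ℂ | ∀ U ∈ nhds z, μ U ≠ 0}

/-- The second type functions `s_n(z) := ∫ conj(p_n(ζ))/(z − ζ) dμ(ζ)`. -/
noncomputable def secondKind (μ : Measure ℂ) (p : ℕ → Polynomial ℂ) (n : ℕ) (z : ℂ) : ℂ :=
  ∫ ζ, (starRingEnd ℂ) ((p n).eval ζ) / (z - ζ) ∂μ

/-- `(P,Q)` is a solution of the `(n,m)` Padé-orthogonal problem for `F` with respect to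
`μ`: `deg P ≤ n`, `deg Q ≤ m`, `Q ≢ 0`, and `⟨QF − P, p_j⟩_μ = 0` for `j = 0,…,n+m`. -/
def IsPadeSol (μ : Measure ℂ) (p : ℕ → Polynomial ℂ) (F : ℂ → ℂ) (n m : ℕ)
    (P Q : Polynomial ℂ) : Prop :=
  P.degree ≤ n ∧ Q.degree ≤ m ∧ Q ≠ 0 ∧
  ∀ j : ℕ, j ≤ n + m →
    innerMu μ (fun z => Q.eval z * F z - P.eval z) (fun z => (p j).eval z) = 0

/-- `Δ_{n,m}(F,μ)`: the determinant of the `m×m` matrix whose `(i,j)` entry (with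
`1`-based indexing) is `⟨z^{j−1}F, p_{n+i}⟩_μ`. -/
noncomputable def Delta (μ : Measure ℂ) (p : ℕ → Polynomial ℂ) (F : ℂ → ℂ) (n m : ℕ) : ℂ :=
  Matrix.det (Matrix.of fun i j : Fin m =>
    innerMu μ (fun z => z ^ (j : ℕ) * F z) (fun z => (p (n + 1 + i)).eval z))

/-!
The matrix of `Δ_{n,m}` sends the coefficient vector of a polynomial `Q` of degree `< m` to the
moments `⟨QF, p_{n+1+i}⟩_μ`, `i < m`. A nonzero `Q` of degree `≤ m` is the denominator of a
solution iff these `m` moments vanish: polynomials of degree `≤ n` are orthogonal to `p_j` for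
`j > n`, and conversely the orthogonal projection of `QF` onto them is a valid numerator. So a
solution with `deg Q < m` exists iff the matrix has a nontrivial kernel, i.e. iff `Δ_{n,m} = 0`.
-/

section PolynomialInner

variable {μ : Measure ℂ}

lemma ae_mem_measSupp (μ : Measure ℂ) : ∀ᵐ z ∂μ, z ∈ measSupp μ := by
  refine measure_null_of_locally_null _ fun z hz => ?_
  simp only [measSupp, mem_compl_iff, mem_ofPred_eq, not_forall, not_not] at hz
  obtain ⟨U, hU, hU0⟩ := hz
  exact ⟨U, nhdsWithin_le_nhds hU, hU0⟩

lemma MeasureTheory.Integrable.continuous_mul_of_isCompact_measSupp (hμ : IsCompact (measSupp μ))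
    {f g : ℂ → ℂ} (hf : Continuous f) (hg : Integrable g μ) :
    Integrable (fun z => f z * g z) μ := by
  obtain ⟨C, hC⟩ := hμ.exists_bound_of_continuousOn hf.continuousOn
  exact hg.bdd_mul hf.aestronglyMeasurable
    ((ae_mem_measSupp μ).mono fun z hz => hC z hz)

lemma integrable_eval_mul_conj_eval (hμ : IsCompact (measSupp μ)) {F : ℂ → ℂ}
    (hF : Integrable F μ) (Q B : ℂ[X]) :
    Integrable (fun z => Q.eval z * F z * starRingEnd ℂ (B.eval z)) μ := by
  have hB := hF.continuous_mul_of_isCompact_measSupp hμ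
    (Complex.continuous_conj.comp B.continuous)
  have hQB := hB.continuous_mul_of_isCompact_measSupp hμ Q.continuous
  refine hQB.congr (Eventually.of_forall fun z => ?_)
  simp only [Function.comp_apply]
  ring

noncomputable def innerMuPolyMul (hμ : IsCompact (measSupp μ)) {F : ℂ → ℂ}
    (hF : Integrable F μ) (B : ℂ[X]) : ℂ[X] →ₗ[ℂ] ℂ where
  toFun Q := innerMu μ (fun z => Q.eval z * F z) (fun z => B.eval z)
  map_add' Q R := by
    simp only [innerMu, eval_add, add_mul]
    exact integral_add (integrable_eval_mul_conj_eval hμ hF Q B)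
      (integrable_eval_mul_conj_eval hμ hF R B)
  map_smul' c Q := by
    simp only [innerMu, eval_smul, smul_eq_mul, RingHom.id_apply, mul_assoc]
    exact integral_const_mul c _

lemma innerMuPolyMul_apply (hμ : IsCompact (measSupp μ)) {F : ℂ → ℂ} (hF : Integrable F μ)
    (B Q : ℂ[X]) :
    innerMuPolyMul hμ hF B Q = innerMu μ (fun z => Q.eval z * F z) (fun z => B.eval z) :=
  rfl

lemma innerMuPolyMul_one_apply [IsFiniteMeasure μ] (hμ : IsCompact (measSupp μ)) (B P : ℂ[X]) :
    innerMuPolyMul hμ (integrable_const 1) B P =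
      innerMu μ (fun z => P.eval z) (fun z => B.eval z) := by
  simp only [innerMuPolyMul_apply, mul_one]

lemma innerMu_eval_mul_sub_eval [IsFiniteMeasure μ] (hμ : IsCompact (measSupp μ)) {F : ℂ → ℂ}
    (hF : Integrable F μ) (Q P B : ℂ[X]) :
    innerMu μ (fun z => Q.eval z * F z - P.eval z) (fun z => B.eval z) =
      innerMu μ (fun z => Q.eval z * F z) (fun z => B.eval z) -
        innerMu μ (fun z => P.eval z) (fun z => B.eval z) := by
  have hP := integrable_eval_mul_conj_eval hμ (integrable_const (1 : ℂ)) P B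
  simp only [mul_one] at hP
  simp only [innerMu, sub_mul]
  exact integral_sub (integrable_eval_mul_conj_eval hμ hF Q B) hP

end PolynomialInner

section Orthogonality

variable {μ : Measure ℂ} {p : ℕ → ℂ[X]}

lemma innerMu_eval_eq_zero_of_degree_lt [IsFiniteMeasure μ] (hμ : IsCompact (measSupp μ))
    (hdeg : ∀ n : ℕ, (p n).degree = n) {j : ℕ}
    (horth : ∀ k < j, innerMu μ (fun z => (p k).eval z) (fun z => (p j).eval z) = 0)
    {P : ℂ[X]} (hP : P.degree < j) :
    innerMu μ (fun z => P.eval z) (fun z => (p j).eval z) = 0 := by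
  let S : Sequence ℂ := ⟨p, hdeg⟩
  have hspan : P ∈ Submodule.span ℂ (p '' Iio j) := by
    rw [S.span_degreeLT fun i _ => (leadingCoeff_ne_zero.2 (S.ne_zero i)).isUnit]
    exact mem_degreeLT.2 hP
  rw [← innerMuPolyMul_one_apply hμ]
  refine (Submodule.span_le (p := LinearMap.ker _)).2 ?_ hspan
  rintro _ ⟨k, hk, rfl⟩
  exact (innerMuPolyMul_one_apply hμ _ _).trans (horth k hk)

noncomputable def orthogonalProjectionPoly (μ : Measure ℂ) (p : ℕ → ℂ[X]) (n : ℕ)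
    (f : ℂ → ℂ) : ℂ[X] :=
  ∑ j ∈ Finset.range (n + 1), innerMu μ f (fun z => (p j).eval z) • p j

lemma degree_orthogonalProjectionPoly_le (hdeg : ∀ n : ℕ, (p n).degree = n) (n : ℕ)
    (f : ℂ → ℂ) : (orthogonalProjectionPoly μ p n f).degree ≤ n := by
  rw [← mem_degreeLE]
  refine Submodule.sum_mem _ fun j hj => Submodule.smul_mem _ _ (mem_degreeLE.2 ?_)
  rw [hdeg j]
  exact_mod_cast Nat.lt_succ_iff.1 (Finset.mem_range.1 hj)

lemma innerMu_orthogonalProjectionPoly [IsFiniteMeasure μ] (hμ : IsCompact (measSupp μ))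
    (horth : ∀ n k : ℕ,
      innerMu μ (fun z => (p n).eval z) (fun z => (p k).eval z) = if n = k then 1 else 0)
    (n : ℕ) (f : ℂ → ℂ) (k : ℕ) :
    innerMu μ (fun z => (orthogonalProjectionPoly μ p n f).eval z) (fun z => (p k).eval z) =
      if k ≤ n then innerMu μ f (fun z => (p k).eval z) else 0 := by
  rw [← innerMuPolyMul_one_apply hμ, orthogonalProjectionPoly, map_sum]
  simp only [map_smul, innerMuPolyMul_one_apply, horth, smul_eq_mul, mul_ite, mul_one, mul_zero]
  simp

end Orthogonality

section Pade

variable {μ : Measure ℂ} [IsFiniteMeasure μ] {p : ℕ → ℂ[X]} {F : ℂ → ℂ} {n m : ℕ}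

lemma IsPadeSol.innerMu_eq_zero (hμ : IsCompact (measSupp μ))
    (hdeg : ∀ n : ℕ, (p n).degree = n)
    (horth : ∀ n k : ℕ,
      innerMu μ (fun z => (p n).eval z) (fun z => (p k).eval z) = if n = k then 1 else 0)
    (hF : Integrable F μ) {P Q : ℂ[X]} (hPQ : IsPadeSol μ p F n m P Q) (i : Fin m) :
    innerMu μ (fun z => Q.eval z * F z) (fun z => (p (n + 1 + i)).eval z) = 0 := by
  obtain ⟨hP, -, -, hsol⟩ := hPQ
  have hPorth := innerMu_eval_eq_zero_of_degree_lt hμ hdeg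
    (fun k hk => (horth k _).trans (if_neg hk.ne)) (j := n + 1 + i)
    (hP.trans_lt (by exact_mod_cast (by omega : n < n + 1 + i)))
  have := hsol (n + 1 + i) (by omega)
  rwa [innerMu_eval_mul_sub_eval hμ hF, hPorth, sub_zero] at this

lemma isPadeSol_orthogonalProjectionPoly (hμ : IsCompact (measSupp μ))
    (hdeg : ∀ n : ℕ, (p n).degree = n)
    (horth : ∀ n k : ℕ,
      innerMu μ (fun z => (p n).eval z) (fun z => (p k).eval z) = if n = k then 1 else 0)
    (hF : Integrable F μ) {Q : ℂ[X]} (hQ : Q.degree ≤ m) (hQ0 : Q ≠ 0)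
    (hQF : ∀ i : Fin m,
      innerMu μ (fun z => Q.eval z * F z) (fun z => (p (n + 1 + i)).eval z) = 0) :
    IsPadeSol μ p F n m (orthogonalProjectionPoly μ p n fun z => Q.eval z * F z) Q := by
  refine ⟨degree_orthogonalProjectionPoly_le hdeg n _, hQ, hQ0, fun j hj => ?_⟩
  rw [innerMu_eval_mul_sub_eval hμ hF, innerMu_orthogonalProjectionPoly hμ horth]
  split_ifs with hjn
  · exact sub_self _
  · obtain ⟨i, rfl⟩ : ∃ i, j = n + 1 + i := ⟨j - (n + 1), by omega⟩
    rw [sub_zero]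
    exact hQF ⟨i, by omega⟩

end Pade

section Delta

open scoped Matrix

noncomputable def deltaMatrix (μ : Measure ℂ) (p : ℕ → ℂ[X]) (F : ℂ → ℂ) (n m : ℕ) :
    Matrix (Fin m) (Fin m) ℂ :=
  Matrix.of fun i j : Fin m =>
    innerMu μ (fun z => z ^ (j : ℕ) * F z) (fun z => (p (n + 1 + i)).eval z)

variable {μ : Measure ℂ} {p : ℕ → ℂ[X]} {F : ℂ → ℂ} {n m : ℕ}

lemma Delta_eq_det_deltaMatrix : Delta μ p F n m = (deltaMatrix μ p F n m).det :=
  rfl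

lemma deltaMatrix_mulVec_degreeLTEquiv (hμ : IsCompact (measSupp μ)) (hF : Integrable F μ)
    (Q : degreeLT ℂ m) (i : Fin m) :
    (deltaMatrix μ p F n m *ᵥ degreeLTEquiv ℂ m Q) i =
      innerMu μ (fun z => (Q : ℂ[X]).eval z * F z) (fun z => (p (n + 1 + i)).eval z) := by
  have hQ : (Q : ℂ[X]) = ∑ k : Fin m, (Q : ℂ[X]).coeff k • X ^ (k : ℕ) := by
    conv_lhs => rw [← (degreeLT.basis ℂ m).sum_repr Q]
    simp
  rw [← innerMuPolyMul_apply hμ hF, hQ, map_sum]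
  simp [Matrix.mulVec, dotProduct, deltaMatrix, innerMuPolyMul_apply, degreeLTEquiv, mul_comm]

end Delta

lemma delta_eq_zero_iff_exists_isPadeSol_degree_lt {μ : Measure ℂ} [IsFiniteMeasure μ]
    (hμ : IsCompact (measSupp μ)) {p : ℕ → ℂ[X]} (hdeg : ∀ n : ℕ, (p n).degree = n)
    (horth : ∀ n k : ℕ,
      innerMu μ (fun z => (p n).eval z) (fun z => (p k).eval z) = if n = k then 1 else 0)
    {F : ℂ → ℂ} (hF : Integrable F μ) (n m : ℕ) :
    Delta μ p F n m = 0 ↔ ∃ P Q, IsPadeSol μ p F n m P Q ∧ Q.degree < m := by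
  rw [Delta_eq_det_deltaMatrix, ← Matrix.exists_mulVec_eq_zero_iff,
    (degreeLTEquiv ℂ m).surjective.exists]
  constructor
  · rintro ⟨Q, hQ0, hMQ⟩
    have hQ := mem_degreeLT.1 Q.2
    refine ⟨_, Q, isPadeSol_orthogonalProjectionPoly hμ hdeg horth hF hQ.le
      (by simpa using hQ0) fun i => ?_, hQ⟩
    rw [← deltaMatrix_mulVec_degreeLTEquiv hμ hF, hMQ, Pi.zero_apply]
  · rintro ⟨P, Q, hPQ, hQ⟩
    refine ⟨⟨Q, mem_degreeLT.2 hQ⟩, by simpa using hPQ.2.2.1, funext fun i => ?_⟩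
    rw [deltaMatrix_mulVec_degreeLTEquiv hμ hF]
    exact hPQ.innerMu_eq_zero hμ hdeg horth hF i

theorem delta_ne_zero_iff_general
    (μ : Measure ℂ) [IsFiniteMeasure μ]
    (hsuppC : IsCompact (measSupp μ))
    (p : ℕ → Polynomial ℂ)
    (hdeg : ∀ n : ℕ, (p n).degree = n)
    (horth : ∀ n k : ℕ,
      innerMu μ (fun z => (p n).eval z) (fun z => (p k).eval z) = if n = k then 1 else 0)
    (F : ℂ → ℂ) (hF : MemLp F 2 μ) (n m : ℕ) :
    Delta μ p F n m ≠ 0 ↔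
      ∀ P Q : Polynomial ℂ, IsPadeSol μ p F n m P Q → Q.degree = m := by
  rw [Ne, delta_eq_zero_iff_exists_isPadeSol_degree_lt hsuppC hdeg horth
    (hF.integrable one_le_two) n m]
  simp only [not_exists, not_and, not_lt]
  exact forall₂_congr fun P Q => imp_congr_right fun hPQ =>
    ⟨le_antisymm hPQ.2.1, ge_of_eq⟩

/-- Let `F ∈ L²(μ)` and let `n, m` be nonnegative integers. Then `Δ_{n,m}(F,μ) ≠ 0` if and
only if every solution `(P,Q)` of the `(n,m)` Padé-orthogonal problem for `F` with respect
to `μ` satisfies `deg Q = m`. -/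
theorem delta_ne_zero_iff
    (μ : Measure ℂ) [IsFiniteMeasure μ]
    (hsuppInf : (measSupp μ).Infinite) (hsuppC : IsCompact (measSupp μ))
    (p : ℕ → Polynomial ℂ)
    (hdeg : ∀ n : ℕ, (p n).degree = n)
    (hlead : ∀ n : ℕ, 0 < ((p n).leadingCoeff).re ∧ ((p n).leadingCoeff).im = 0)
    (horth : ∀ n k : ℕ,
      innerMu μ (fun z => (p n).eval z) (fun z => (p k).eval z) = if n = k then 1 else 0)
    (F : ℂ → ℂ) (hF : MemLp F 2 μ) (n m : ℕ) :
    Delta μ p F n m ≠ 0 ↔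
      ∀ P Q : Polynomial ℂ, IsPadeSol μ p F n m P Q → Q.degree = m :=
  delta_ne_zero_iff_general μ hsuppC p hdeg horth F hF n m
end

section
/- Let F ∈ L²(μ) and let n, m be nonnegative integers with Δ_{n,m}(F,μ) ≠ 0. Then there exists a solution (P,Q) of the (n,m) Padé-orthogonal problem for F with Q monic of degree m, this pair (P,Q) is unique, and any other solution (P',Q') of the problem satisfies P'·Q = P·Q' (i.e., it determines the same rational function [n/m]_F^μ = P/Q). -/
open MeasureTheory Polynomial Filter Topology Set
open scoped ENNReal

/-!
Expanding in the orthonormal basis, the conditions `⟨QF − P, p_j⟩ = 0` for `j ≤ n` say exactly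
that `P` is the orthogonal projection of `QF` onto the polynomials of degree `≤ n`; the remaining
conditions `⟨QF, p_j⟩ = 0` for `n < j ≤ n + m` are `m` linear equations in the `m + 1`
coefficients of `Q`, whose matrix on the first `m` coefficients is the one defining
`Δ_{n,m}(F,μ)`. When `Δ_{n,m} ≠ 0` their solutions of degree `≤ m` form a line spanned by a monic
`Q` of degree `m`, so every solution is a scalar multiple of `(P, Q)`.
-/

lemma integrable_mul_conj {α : Type*} [MeasurableSpace α] {ν : Measure α} {f g : α → ℂ}
    (hf : MemLp f 2 ν) (hg : MemLp g 2 ν) :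
    Integrable (fun z => f z * starRingEnd ℂ (g z)) ν :=
  hf.integrable_mul hg.star

lemma exists_sum_smul_eq_of_degree_le {K : Type*} [Field K] {p : ℕ → K[X]}
    (hdeg : ∀ n : ℕ, (p n).degree = n) {R : K[X]} {N : ℕ} (hR : R.degree ≤ N) :
    ∃ c : ℕ → K, ∑ j ∈ Finset.range (N + 1), c j • p j = R := by
  let S : Sequence K := ⟨p, hdeg⟩
  have hspan := S.span_degreeLT (m := N + 1) fun i _ =>
    isUnit_iff_ne_zero.mpr (leadingCoeff_ne_zero.mpr (S.ne_zero i))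
  have hRmem : R ∈ degreeLT K (N + 1) :=
    mem_degreeLT.mpr (hR.trans_lt (by exact_mod_cast N.lt_succ_self))
  rw [← hspan, ← Finset.coe_range] at hRmem
  exact (Submodule.mem_span_image_finset_iff_exists_fun' K).mp hRmem

theorem exists_monic_forall_eq_smul_of_bijective {K V : Type*} [Field K] [AddCommGroup V]
    [Module K V] (T : K[X] →ₗ[K] V) {m : ℕ}
    (hT : Function.Bijective (T ∘ₗ (degreeLT K m).subtype)) :
    ∃ Q₀ : K[X], Q₀.Monic ∧ Q₀.degree = m ∧ T Q₀ = 0 ∧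
      ∀ Q : K[X], Q.degree ≤ m → T Q = 0 → Q = Q.coeff m • Q₀ := by
  obtain ⟨⟨R, hRmem⟩, hR⟩ := hT.2 (T (X ^ m))
  have hRdeg : R.degree < m := mem_degreeLT.mp hRmem
  have hTQ₀ : T (X ^ m - R) = 0 := by
    rw [map_sub, ← hR, LinearMap.comp_apply, Submodule.subtype_apply, sub_self]
  refine ⟨X ^ m - R, monic_X_pow_sub hRdeg, ?_, hTQ₀, fun Q hQ hTQ => ?_⟩
  · rw [degree_sub_eq_left_of_degree_lt] <;> simp [hRdeg]
  have hD : Q - Q.coeff m • (X ^ m - R) ∈ degreeLT K m := by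
    refine mem_degreeLT.mpr <| (degree_lt_iff_coeff_zero _ _).mpr fun k hk => ?_
    have hRk : R.coeff k = 0 := coeff_eq_zero_of_degree_lt (hRdeg.trans_le (by exact_mod_cast hk))
    rcases hk.eq_or_lt with rfl | hlt
    · simp [hRk]
    · simp [hRk, coeff_eq_zero_of_degree_lt (hQ.trans_lt (by exact_mod_cast hlt)), hlt.ne']
  have hD0 : (⟨_, hD⟩ : degreeLT K m) = 0 := hT.1 (by simp [hTQ, hTQ₀])
  exact sub_eq_zero.mp (congrArg Subtype.val hD0)

variable {μ : Measure ℂ}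

lemma measSupp_eq_support (μ : Measure ℂ) : measSupp μ = μ.support := by
  ext z
  simp only [measSupp, mem_ofPred_eq, Measure.mem_support_iff_forall, pos_iff_ne_zero]

lemma memLp_top_eval (hsupp : IsCompact (measSupp μ)) (R : ℂ[X]) :
    MemLp (fun z => R.eval z) ⊤ μ := by
  obtain ⟨C, hC⟩ := hsupp.exists_bound_of_continuousOn R.continuous.continuousOn
  refine memLp_top_of_bound R.continuous.aestronglyMeasurable C ?_
  filter_upwards [measSupp_eq_support μ ▸ μ.support_mem_ae] with z hz using hC z hz

lemma memLp_two_eval [IsFiniteMeasure μ] (hsupp : IsCompact (measSupp μ)) (R : ℂ[X]) :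
    MemLp (fun z => R.eval z) 2 μ :=
  (memLp_top_eval hsupp R).mono_exponent le_top

lemma memLp_two_eval_mul (hsupp : IsCompact (measSupp μ)) {F : ℂ → ℂ} (hF : MemLp F 2 μ)
    (R : ℂ[X]) : MemLp (fun z => R.eval z * F z) 2 μ :=
  hF.smul (r := 2) (memLp_top_eval hsupp R)

lemma innerMu_sub {f g h : ℂ → ℂ} (hf : MemLp f 2 μ) (hg : MemLp g 2 μ) (hh : MemLp h 2 μ) :
    innerMu μ (fun z => f z - g z) h = innerMu μ f h - innerMu μ g h := by
  simp only [innerMu, sub_mul]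
  exact integral_sub (integrable_mul_conj hf hh) (integrable_mul_conj hg hh)

lemma innerMu_const_mul (c : ℂ) (f h : ℂ → ℂ) :
    innerMu μ (fun z => c * f z) h = c * innerMu μ f h := by
  simp only [innerMu, mul_assoc]
  exact integral_const_mul c _

noncomputable def polyInner (hsupp : IsCompact (measSupp μ)) {F h : ℂ → ℂ} (hF : MemLp F 2 μ)
    (hh : MemLp h 2 μ) : ℂ[X] →ₗ[ℂ] ℂ where
  toFun Q := innerMu μ (fun z => Q.eval z * F z) h
  map_add' Q R := by
    simp only [innerMu, eval_add, add_mul]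
    exact integral_add (integrable_mul_conj (memLp_two_eval_mul hsupp hF Q) hh)
      (integrable_mul_conj (memLp_two_eval_mul hsupp hF R) hh)
  map_smul' c Q := by
    simp only [eval_smul, smul_eq_mul, mul_assoc, RingHom.id_apply]
    exact innerMu_const_mul c _ h

section Orthonormal

variable [IsFiniteMeasure μ] {p : ℕ → ℂ[X]}

lemma innerMu_sum_smul (hsupp : IsCompact (measSupp μ))
    (horth : ∀ n k : ℕ,
      innerMu μ (fun z => (p n).eval z) (fun z => (p k).eval z) = if n = k then 1 else 0)
    (c : ℕ → ℂ) (N k : ℕ) :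
    innerMu μ (fun z => (∑ j ∈ Finset.range (N + 1), c j • p j).eval z)
      (fun z => (p k).eval z) = if k ≤ N then c k else 0 := by
  have hpoly : ∀ R : ℂ[X], innerMu μ (fun z => R.eval z) (fun z => (p k).eval z) =
      polyInner hsupp (memLp_const 1) (memLp_two_eval hsupp (p k)) R := fun R => by
    simp [polyInner]
  simp only [hpoly, map_sum, map_smul]
  simp [← hpoly, horth]

lemma eq_sum_innerMu_smul (hsupp : IsCompact (measSupp μ)) (hdeg : ∀ n : ℕ, (p n).degree = n)
    (horth : ∀ n k : ℕ,
      innerMu μ (fun z => (p n).eval z) (fun z => (p k).eval z) = if n = k then 1 else 0)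
    {R : ℂ[X]} {N : ℕ} (hR : R.degree ≤ N) :
    R = ∑ j ∈ Finset.range (N + 1),
      innerMu μ (fun z => R.eval z) (fun z => (p j).eval z) • p j := by
  obtain ⟨c, rfl⟩ := exists_sum_smul_eq_of_degree_le hdeg hR
  refine Finset.sum_congr rfl fun j hj => ?_
  rw [innerMu_sum_smul hsupp horth, if_pos (Nat.lt_succ_iff.mp (Finset.mem_range.mp hj))]

lemma innerMu_eq_zero_of_degree_lt (hsupp : IsCompact (measSupp μ))
    (hdeg : ∀ n : ℕ, (p n).degree = n)
    (horth : ∀ n k : ℕ,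
      innerMu μ (fun z => (p n).eval z) (fun z => (p k).eval z) = if n = k then 1 else 0)
    {R : ℂ[X]} {N k : ℕ} (hR : R.degree ≤ N) (hk : N < k) :
    innerMu μ (fun z => R.eval z) (fun z => (p k).eval z) = 0 := by
  obtain ⟨c, rfl⟩ := exists_sum_smul_eq_of_degree_le hdeg hR
  rw [innerMu_sum_smul hsupp horth, if_neg hk.not_ge]

end Orthonormal

section Pade

noncomputable def padeNumerator (μ : Measure ℂ) (p : ℕ → ℂ[X]) (F : ℂ → ℂ) (n : ℕ) (Q : ℂ[X]) :
    ℂ[X] :=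
  ∑ j ∈ Finset.range (n + 1), innerMu μ (fun z => Q.eval z * F z) (fun z => (p j).eval z) • p j

/-- On the monomials `z^j`, `j < m`, its values are the columns of the matrix of
`Delta μ p F n m`. -/
noncomputable def padeTail [IsFiniteMeasure μ] (hsupp : IsCompact (measSupp μ))
    (p : ℕ → ℂ[X]) {F : ℂ → ℂ} (hF : MemLp F 2 μ) (n m : ℕ) : ℂ[X] →ₗ[ℂ] Fin m → ℂ :=
  LinearMap.pi fun i => polyInner hsupp hF (memLp_two_eval hsupp (p (n + 1 + i)))

variable {p : ℕ → ℂ[X]} {F : ℂ → ℂ} {n m : ℕ}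

lemma padeNumerator_smul (c : ℂ) (Q : ℂ[X]) :
    padeNumerator μ p F n (c • Q) = c • padeNumerator μ p F n Q := by
  simp only [padeNumerator, Finset.smul_sum, smul_smul, eval_smul, smul_eq_mul, mul_assoc,
    innerMu_const_mul]

lemma degree_padeNumerator_le (hdeg : ∀ n : ℕ, (p n).degree = n) (Q : ℂ[X]) :
    (padeNumerator μ p F n Q).degree ≤ n := by
  refine (degree_sum_le _ _).trans <| Finset.sup_le fun j hj => (degree_smul_le _ _).trans ?_
  rw [hdeg j]
  exact_mod_cast Nat.lt_succ_iff.mp (Finset.mem_range.mp hj)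

variable [IsFiniteMeasure μ]

lemma padeTail_apply (hsupp : IsCompact (measSupp μ)) (hF : MemLp F 2 μ) (Q : ℂ[X]) (i : Fin m) :
    padeTail hsupp p hF n m Q i =
      innerMu μ (fun z => Q.eval z * F z) (fun z => (p (n + 1 + i)).eval z) :=
  rfl

theorem isPadeSol_iff (hsupp : IsCompact (measSupp μ)) (hdeg : ∀ n : ℕ, (p n).degree = n)
    (horth : ∀ n k : ℕ,
      innerMu μ (fun z => (p n).eval z) (fun z => (p k).eval z) = if n = k then 1 else 0)
    (hF : MemLp F 2 μ) {P Q : ℂ[X]} :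
    IsPadeSol μ p F n m P Q ↔
      Q.degree ≤ m ∧ Q ≠ 0 ∧ padeTail hsupp p hF n m Q = 0 ∧ P = padeNumerator μ p F n Q := by
  have hsplit : ∀ j, innerMu μ (fun z => Q.eval z * F z - P.eval z) (fun z => (p j).eval z) =
      innerMu μ (fun z => Q.eval z * F z) (fun z => (p j).eval z) -
        innerMu μ (fun z => P.eval z) (fun z => (p j).eval z) := fun j =>
    innerMu_sub (memLp_two_eval_mul hsupp hF Q) (memLp_two_eval hsupp P) (memLp_two_eval hsupp _)
  constructor
  · rintro ⟨hP, hQ, hQ0, hsol⟩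
    have hPQ : ∀ j ≤ n + m, innerMu μ (fun z => P.eval z) (fun z => (p j).eval z) =
        innerMu μ (fun z => Q.eval z * F z) (fun z => (p j).eval z) := fun j hj =>
      (sub_eq_zero.mp ((hsplit j).symm.trans (hsol j hj))).symm
    refine ⟨hQ, hQ0, funext fun i => ?_, ?_⟩
    · rw [padeTail_apply, ← hPQ _ (by omega)]
      exact innerMu_eq_zero_of_degree_lt hsupp hdeg horth hP (by omega)
    · refine (eq_sum_innerMu_smul hsupp hdeg horth hP).trans (Finset.sum_congr rfl fun j hj => ?_)
      rw [hPQ j (Nat.le_add_right_of_le (Nat.lt_succ_iff.mp (Finset.mem_range.mp hj)))]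
  · rintro ⟨hQ, hQ0, htail, rfl⟩
    refine ⟨degree_padeNumerator_le hdeg Q, hQ, hQ0, fun j hj => ?_⟩
    rw [hsplit, padeNumerator, innerMu_sum_smul hsupp horth]
    split_ifs with hjn
    · exact sub_self _
    · obtain ⟨i, rfl⟩ : ∃ i : Fin m, j = n + 1 + i :=
        ⟨⟨j - (n + 1), by omega⟩, by dsimp only; omega⟩
      rw [sub_zero, ← padeTail_apply hsupp hF, htail, Pi.zero_apply]

lemma bijective_padeTail_comp_subtype (hsupp : IsCompact (measSupp μ)) (hF : MemLp F 2 μ)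
    (hΔ : Delta μ p F n m ≠ 0) :
    Function.Bijective (padeTail hsupp p hF n m ∘ₗ (degreeLT ℂ m).subtype) := by
  set M : Matrix (Fin m) (Fin m) ℂ := Matrix.of fun i j : Fin m =>
    innerMu μ (fun z => z ^ (j : ℕ) * F z) (fun z => (p (n + 1 + i)).eval z)
  have hM : IsUnit M := (Matrix.isUnit_iff_isUnit_det M).mpr (isUnit_iff_ne_zero.mpr hΔ)
  have hMbij : Function.Bijective M.mulVec :=
    ⟨Matrix.mulVec_injective_iff_isUnit.mpr hM, Matrix.mulVec_surjective_iff_isUnit.mpr hM⟩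
  have hcomp : ⇑(padeTail hsupp p hF n m ∘ₗ (degreeLT ℂ m).subtype) =
      M.mulVec ∘ degreeLTEquiv ℂ m := by
    rw [← LinearEquiv.comp_symm_eq]
    change ⇑(padeTail hsupp p hF n m ∘ₗ (degreeLT ℂ m).subtype ∘ₗ
      (degreeLTEquiv ℂ m).symm.toLinearMap) = ⇑(Matrix.toLin' M)
    congr 1
    refine LinearMap.pi_ext' fun j => LinearMap.ext_ring <| funext fun i => ?_
    simp [padeTail_apply, M, degreeLTEquiv, Pi.single_apply, apply_ite (monomial _)]
  rw [hcomp]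
  exact hMbij.comp (degreeLTEquiv ℂ m).bijective

end Pade
theorem pade_unique_of_delta_ne_zero_general
    (μ : Measure ℂ) [IsFiniteMeasure μ]
    (hsuppC : IsCompact (measSupp μ))
    (p : ℕ → Polynomial ℂ)
    (hdeg : ∀ n : ℕ, (p n).degree = n)
    (horth : ∀ n k : ℕ,
      innerMu μ (fun z => (p n).eval z) (fun z => (p k).eval z) = if n = k then 1 else 0)
    (F : ℂ → ℂ) (hF : MemLp F 2 μ) (n m : ℕ) (hΔ : Delta μ p F n m ≠ 0) :
    ∃ P Q : Polynomial ℂ,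
      IsPadeSol μ p F n m P Q ∧ Q.Monic ∧ Q.degree = m ∧
      (∀ P' Q' : Polynomial ℂ,
        IsPadeSol μ p F n m P' Q' ∧ Q'.Monic ∧ Q'.degree = m → P' = P ∧ Q' = Q) ∧
      (∀ P' Q' : Polynomial ℂ, IsPadeSol μ p F n m P' Q' → P' * Q = P * Q') := by
  obtain ⟨Q, hQmonic, hQdeg, hQtail, hker⟩ := exists_monic_forall_eq_smul_of_bijective _
    (bijective_padeTail_comp_subtype hsuppC hF hΔ)
  have hsol : IsPadeSol μ p F n m (padeNumerator μ p F n Q) Q :=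
    (isPadeSol_iff hsuppC hdeg horth hF).mpr ⟨hQdeg.le, hQmonic.ne_zero, hQtail, rfl⟩
  have hmultiple : ∀ P' Q', IsPadeSol μ p F n m P' Q' →
      Q' = Q'.coeff m • Q ∧ P' = Q'.coeff m • padeNumerator μ p F n Q := by
    intro P' Q' h'
    obtain ⟨hQ'deg, -, hQ'tail, rfl⟩ := (isPadeSol_iff hsuppC hdeg horth hF).mp h'
    have hQ' := hker Q' hQ'deg hQ'tail
    exact ⟨hQ', by rw [← padeNumerator_smul, ← hQ']⟩
  refine ⟨padeNumerator μ p F n Q, Q, hsol, hQmonic, hQdeg, ?_, ?_⟩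
  · rintro P' Q' ⟨h', hQ'monic, hQ'deg⟩
    obtain ⟨hQ', hP'⟩ := hmultiple P' Q' h'
    rw [← natDegree_eq_of_degree_eq_some hQ'deg, hQ'monic.coeff_natDegree, one_smul] at hQ' hP'
    exact ⟨hP', hQ'⟩
  · intro P' Q' h'
    obtain ⟨hQ', hP'⟩ := hmultiple P' Q' h'
    rw [hQ', hP', smul_mul_assoc, mul_smul_comm]

/-- Let `F ∈ L²(μ)` and `n, m ≥ 0` with `Δ_{n,m}(F,μ) ≠ 0`. Then there exists a solution
`(P,Q)` of the `(n,m)` Padé-orthogonal problem for `F` with `Q` monic of degree `m`, this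
pair is unique, and any other solution `(P',Q')` satisfies `P'·Q = P·Q'` (it determines the
same rational function `[n/m]_F^μ = P/Q`). -/
theorem pade_unique_of_delta_ne_zero
    (μ : Measure ℂ) [IsFiniteMeasure μ]
    (hsuppInf : (measSupp μ).Infinite) (hsuppC : IsCompact (measSupp μ))
    (p : ℕ → Polynomial ℂ)
    (hdeg : ∀ n : ℕ, (p n).degree = n)
    (hlead : ∀ n : ℕ, 0 < ((p n).leadingCoeff).re ∧ ((p n).leadingCoeff).im = 0)
    (horth : ∀ n k : ℕ,
      innerMu μ (fun z => (p n).eval z) (fun z => (p k).eval z) = if n = k then 1 else 0)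
    (F : ℂ → ℂ) (hF : MemLp F 2 μ) (n m : ℕ) (hΔ : Delta μ p F n m ≠ 0) :
    ∃ P Q : Polynomial ℂ,
      IsPadeSol μ p F n m P Q ∧ Q.Monic ∧ Q.degree = m ∧
      (∀ P' Q' : Polynomial ℂ,
        IsPadeSol μ p F n m P' Q' ∧ Q'.Monic ∧ Q'.degree = m → P' = P ∧ Q' = Q) ∧
      (∀ P' Q' : Polynomial ℂ, IsPadeSol μ p F n m P' Q' → P' * Q = P * Q') :=
  pade_unique_of_delta_ne_zero_general μ hsuppC p hdeg horth F hF n m hΔ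
end
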